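/- arXiv:2605.17149 — 4 statements merged into one kernel-verified Lean document; each statement's English description precedes it below -/
import Mathlib

section
/- Let $\pi$ be a pmf on a finite set $\mathcal{A}$ of size $n$ with all entries positive, let $F = \mathrm{diag}(\pi) - \pi\pi^\top$, and let $P = I - \frac{1}{n}\mathbf{1}\mathbf{1}^\top$. Then the Moore–Penrose pseudoinverse of $F$ equals $P \, \mathrm{diag}(\pi)^{-1} \, P$. -/
open scoped BigOperators
open Matrix

section aux

variable {n : ℕ}

lemma vmv_mul_vmv (u v w x : Fin n → ℝ) :
    Matrix.vecMulVec u v * Matrix.vecMulVec w x = (∑ k, v k * w k) • Matrix.vecMulVec u x := by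
  ext i j
  simp [Matrix.mul_apply, Matrix.vecMulVec_apply, Finset.mul_sum, Finset.sum_mul]
  ring_nf
  congr 1; ext k; ring

lemma diag_mul_vmv (d u v : Fin n → ℝ) :
    Matrix.diagonal d * Matrix.vecMulVec u v = Matrix.vecMulVec (fun i => d i * u i) v := by
  ext i j
  simp [Matrix.mul_apply, Matrix.vecMulVec_apply, Matrix.diagonal, Finset.sum_ite_eq]
  ring

lemma vmv_mul_diag (d u v : Fin n → ℝ) :
    Matrix.vecMulVec u v * Matrix.diagonal d = Matrix.vecMulVec u (fun j => v j * d j) := by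
  ext i j
  simp [Matrix.mul_apply, Matrix.vecMulVec_apply, Matrix.diagonal, Finset.sum_ite_eq]
  ring

lemma vmv_transpose (u v : Fin n → ℝ) :
    (Matrix.vecMulVec u v)ᵀ = Matrix.vecMulVec v u := by
  ext i j
  simp [Matrix.vecMulVec_apply, mul_comm]

end aux

/-- `P diag(π)⁻¹ P` is the Moore–Penrose pseudoinverse of the softmax Fisher matrix
`F = diag(π) - π πᵀ`, where `P = I - (1/n) 𝟙 𝟙ᵀ`: it satisfies the four Penrose
conditions. -/
theorem fisher_pinv {n : ℕ} (hn : 0 < n) (π : Fin n → ℝ)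
    (hpos : ∀ a, 0 < π a) (hsum : ∑ a, π a = 1) :
    let F : Matrix (Fin n) (Fin n) ℝ := Matrix.diagonal π - Matrix.vecMulVec π π
    let P : Matrix (Fin n) (Fin n) ℝ := 1 - (n : ℝ)⁻¹ • Matrix.vecMulVec 1 1
    let G : Matrix (Fin n) (Fin n) ℝ := P * Matrix.diagonal (fun a => (π a)⁻¹) * P
    F * G * F = F ∧ G * F * G = G ∧ (F * G)ᵀ = F * G ∧ (G * F)ᵀ = G * F := by
  intro F P G
  have hnne : (n : ℝ) ≠ 0 := Nat.cast_ne_zero.mpr hn.ne'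
  set J : Matrix (Fin n) (Fin n) ℝ := Matrix.vecMulVec (1 : Fin n → ℝ) 1 with hJ
  -- basic products
  have hJJ : J * J = (n : ℝ) • J := by
    rw [hJ, vmv_mul_vmv]; simp
  have hPP : P * P = P := by
    show (1 - (n : ℝ)⁻¹ • J) * (1 - (n : ℝ)⁻¹ • J) = 1 - (n : ℝ)⁻¹ • J
    simp only [sub_mul, mul_sub, one_mul, mul_one, Matrix.smul_mul, Matrix.mul_smul, hJJ,
      smul_smul]
    rw [inv_mul_cancel₀ hnne, mul_one]
    abel
  have hPt : Pᵀ = P := by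
    show (1 - (n : ℝ)⁻¹ • J)ᵀ = 1 - (n : ℝ)⁻¹ • J
    rw [Matrix.transpose_sub, Matrix.transpose_smul, Matrix.transpose_one, hJ, vmv_transpose]
  have hFt : Fᵀ = F := by
    show (Matrix.diagonal π - Matrix.vecMulVec π π)ᵀ = _
    rw [Matrix.transpose_sub, Matrix.diagonal_transpose, vmv_transpose]
  have hGt : Gᵀ = G := by
    show (P * Matrix.diagonal (fun a => (π a)⁻¹) * P)ᵀ = _
    rw [Matrix.transpose_mul, Matrix.transpose_mul, Matrix.diagonal_transpose, hPt, ← Matrix.mul_assoc]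
  -- F * J = 0
  have hFJ : F * J = 0 := by
    show (Matrix.diagonal π - Matrix.vecMulVec π π) * J = 0
    rw [sub_mul, hJ, diag_mul_vmv, vmv_mul_vmv]
    simp [hsum]
  have hFP : F * P = F := by
    show F * (1 - (n : ℝ)⁻¹ • J) = F
    rw [mul_sub, mul_one, Matrix.mul_smul, hFJ, smul_zero, sub_zero]
  have hPF : P * F = F := by
    have := congrArg Matrix.transpose hFP
    rwa [Matrix.transpose_mul, hPt, hFt] at this
  -- F * D⁻¹ = 1 - vecMulVec π 1
  have hFD : F * Matrix.diagonal (fun a => (π a)⁻¹) = 1 - Matrix.vecMulVec π 1 := by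
    show (Matrix.diagonal π - Matrix.vecMulVec π π) * _ = _
    have hone : (fun a => π a * (π a)⁻¹) = fun _ : Fin n => (1 : ℝ) :=
      funext fun a => mul_inv_cancel₀ (hpos a).ne'
    rw [sub_mul, Matrix.diagonal_mul_diagonal, vmv_mul_diag, hone]
    rfl
  have hpi1P : Matrix.vecMulVec π 1 * P = 0 := by
    show Matrix.vecMulVec π 1 * (1 - (n : ℝ)⁻¹ • J) = 0
    rw [mul_sub, mul_one, Matrix.mul_smul, hJ, vmv_mul_vmv]
    simp [smul_smul, inv_mul_cancel₀ hnne]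
  have hFG : F * G = P := by
    show F * (P * Matrix.diagonal (fun a => (π a)⁻¹) * P) = P
    rw [← Matrix.mul_assoc, ← Matrix.mul_assoc, hFP, hFD, sub_mul, one_mul, hpi1P, sub_zero]
  have hGF : G * F = P := by
    have := congrArg Matrix.transpose hFG
    rwa [Matrix.transpose_mul, hFt, hGt, hPt] at this
  refine ⟨by rw [hFG, hPF], ?_, by rw [hFG, hPt], by rw [hGF, hPt]⟩
  rw [hGF]
  show P * (P * Matrix.diagonal (fun a => (π a)⁻¹) * P) = P * Matrix.diagonal (fun a => (π a)⁻¹) * P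
  rw [← Matrix.mul_assoc, ← Matrix.mul_assoc, hPP]
end

section
/- The null space of the matrix $F = \mathrm{diag}(\pi) - \pi\pi^\top$, where $\pi$ is a pmf on a finite set of size $n$ with all entries positive, is exactly the span of the all-ones vector $\mathbf{1}$. -/
open scoped BigOperators

/-- The null space of `F = diag(π) - π πᵀ` (π a positive pmf) is exactly the span
of the all-ones vector: `F v = 0` iff `v` is constant. -/
theorem fisher_null_space {n : ℕ} (π : Fin n → ℝ)
    (hpos : ∀ a, 0 < π a) (hsum : ∑ a, π a = 1) (v : Fin n → ℝ) :
    (Matrix.diagonal π - Matrix.vecMulVec π π).mulVec v = 0 ↔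
      ∃ c : ℝ, v = fun _ => c := by
  have key : ∀ a, ((Matrix.diagonal π - Matrix.vecMulVec π π).mulVec v) a
      = π a * v a - π a * ∑ b, π b * v b := by
    intro a
    simp [Matrix.mulVec, Matrix.sub_apply, Matrix.vecMulVec_apply, dotProduct,
      Matrix.diagonal_apply, Finset.sum_sub_distrib, Finset.sum_ite_eq,
      Finset.mul_sum, mul_assoc, sub_mul, Finset.sum_sub_distrib]
  constructor
  · intro h
    refine ⟨∑ b, π b * v b, funext fun a => ?_⟩
    have ha := congrFun h a
    rw [key a, Pi.zero_apply, sub_eq_zero] at ha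
    have := (hpos a).ne'
    exact mul_left_cancel₀ this ha
  · rintro ⟨c, rfl⟩
    funext a
    rw [key a, Pi.zero_apply]
    have : ∑ b, π b * c = c := by
      rw [← Finset.sum_mul, hsum, one_mul]
    rw [this]
    ring
end

section
/- Let $\xi$ be a pmf on $\{1, \ldots, L\}$ with $\xi(1) < 1$, and define $q_\xi(\ell') = \xi(\ell'+1)/(1-\xi(1))$ for $1 \le \ell' \le L-1$ (and $q_\xi(L)=0$). Then the mean-centered partial derivative of $q_\xi(\ell')$ with respect to $\xi(\ell)$ equals $\frac{\mathbf{1}(\ell > 1)}{1-\xi(1)} \left[ \mathbf{1}(\ell = \ell' + 1) - q_\xi(\ell') \right]$. -/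
/-!
With `a = ℓ' + 1 ≠ b = 1`, the map `ν ↦ ν a / (1 - ν b)` has partial derivatives
`(δ_{ia} + q δ_{ib}) / (1 - ξ b)`, where `q = ξ a / (1 - ξ b)`. Weighting them by `ξ` over any
index set containing `a` and `b` gives `(ξ a + q ξ b) / (1 - ξ b) = q / (1 - ξ b)`, whatever the
total mass of `ξ`. Hence the centred derivative is `(δ_{ia} - q) / (1 - ξ b)` for `i ≠ b` and
`0` for `i = b`. For `ℓ' = L` the map `ν ↦ q_ν(ℓ')` is identically zero.
-/

open scoped BigOperators
open Fin.NatCast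

section CenteredPartialDeriv

variable {ι : Type*} [Fintype ι]

theorem fderiv_apply_div_one_sub_apply (a b : ι) {ξ : ι → ℝ} (hb : ξ b ≠ 1) (v : ι → ℝ) :
    fderiv ℝ (fun ν : ι → ℝ => ν a / (1 - ν b)) ξ v
      = (v a + ξ a / (1 - ξ b) * v b) / (1 - ξ b) := by
  have hne : 1 - ξ b ≠ 0 := sub_ne_zero.2 hb.symm
  have hden := (hasFDerivAt_const (1 : ℝ) ξ).fun_sub (hasFDerivAt_apply (𝕜 := ℝ) b ξ)
  have h := ((hasFDerivAt_apply (𝕜 := ℝ) a ξ).fun_mul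
    ((hasDerivAt_inv hne).comp_hasFDerivAt ξ hden)).fderiv
  simp only [Function.comp_def, ← div_eq_mul_inv] at h
  rw [h]
  simp only [zero_sub, smul_neg, neg_smul, neg_neg, add_apply,
    smul_apply, ContinuousLinearMap.proj_apply, smul_eq_mul]
  field_simp
  ring

variable [DecidableEq ι]

noncomputable def centeredPartialDeriv (s : Finset ι) (g : (ι → ℝ) → ℝ) (ξ : ι → ℝ) (i : ι) :
    ℝ :=
  fderiv ℝ g ξ (Pi.single i 1) - ∑ j ∈ s, ξ j * fderiv ℝ g ξ (Pi.single j 1)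

theorem sum_mul_fderiv_apply_div_one_sub_apply {s : Finset ι} {a b : ι} (ha : a ∈ s)
    (hb : b ∈ s) {ξ : ι → ℝ} (h1 : ξ b ≠ 1) :
    ∑ j ∈ s, ξ j * fderiv ℝ (fun ν : ι → ℝ => ν a / (1 - ν b)) ξ (Pi.single j 1)
      = ξ a / (1 - ξ b) ^ 2 := by
  have hne : 1 - ξ b ≠ 0 := sub_ne_zero.2 h1.symm
  simp only [fderiv_apply_div_one_sub_apply a b h1, Pi.single_apply, mul_add, mul_div_assoc',
    add_div, Finset.sum_add_distrib, mul_ite, mul_one, mul_zero, ite_div, zero_div]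
  rw [Finset.sum_ite_eq s, Finset.sum_ite_eq s, if_pos ha, if_pos hb]
  field_simp
  ring

theorem centeredPartialDeriv_apply_div_one_sub_apply {s : Finset ι} {a b : ι} (ha : a ∈ s)
    (hb : b ∈ s) (hab : a ≠ b) {ξ : ι → ℝ} (h1 : ξ b ≠ 1) (i : ι) :
    centeredPartialDeriv s (fun ν => ν a / (1 - ν b)) ξ i
      = (if i = b then 0 else 1) / (1 - ξ b) * ((if i = a then 1 else 0) - ξ a / (1 - ξ b)) := by
  have hne : 1 - ξ b ≠ 0 := sub_ne_zero.2 h1.symm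
  rw [centeredPartialDeriv, sum_mul_fderiv_apply_div_one_sub_apply ha hb h1,
    fderiv_apply_div_one_sub_apply a b h1]
  rcases eq_or_ne i b with rfl | hib
  · rw [Pi.single_eq_of_ne hab, Pi.single_eq_same, if_pos rfl]
    field_simp
    ring
  rcases eq_or_ne i a with rfl | hia
  · rw [Pi.single_eq_same, Pi.single_eq_of_ne hib.symm, if_neg hib, if_pos rfl]
    field_simp
    ring
  · rw [Pi.single_eq_of_ne hia.symm, Pi.single_eq_of_ne hib.symm, if_neg hib, if_neg hia]
    field_simp
    ring

end CenteredPartialDeriv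

theorem Fin.natCast_eq_natCast_iff_of_le {n a b : ℕ} (ha : a ≤ n) (hb : b ≤ n) :
    (a : Fin (n + 1)) = b ↔ a = b := by
  simp only [le_antisymm_iff, Fin.natCast_le_natCast ha hb, Fin.natCast_le_natCast hb ha]

theorem shifted_pmf_centered_deriv_general (L : ℕ)
    (ξ : Fin (L + 1) → ℝ)
    (h1 : ξ ((1 : ℕ) : Fin (L + 1)) < 1)
    (q : (Fin (L + 1) → ℝ) → ℕ → ℝ)
    (hq : ∀ ν ℓ', q ν ℓ' =
      if ℓ' + 1 ≤ L then ν ((ℓ' + 1 : ℕ) : Fin (L + 1)) / (1 - ν ((1 : ℕ) : Fin (L + 1)))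
      else 0)
    (ℓ ℓ' : ℕ) (hℓ : ℓ ∈ Finset.Icc 1 L) (hℓ' : ℓ' ∈ Finset.Icc 1 L) :
    fderiv ℝ (fun ν => q ν ℓ') ξ (Pi.single ((ℓ : ℕ) : Fin (L + 1)) 1)
        - ∑ ℓt ∈ Finset.Icc 1 L, ξ ((ℓt : ℕ) : Fin (L + 1)) *
            fderiv ℝ (fun ν => q ν ℓ') ξ (Pi.single ((ℓt : ℕ) : Fin (L + 1)) 1)
      = (if 1 < ℓ then 1 else 0) / (1 - ξ ((1 : ℕ) : Fin (L + 1))) *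
          ((if ℓ = ℓ' + 1 then 1 else 0) - q ξ ℓ') := by
  rw [Finset.mem_Icc] at hℓ hℓ'
  by_cases hshift : ℓ' + 1 ≤ L
  swap
  · have hne : ℓ ≠ ℓ' + 1 := by omega
    simp [hq, hshift, hne]
  have hcast {m n : ℕ} (hm : m ≤ L) (hn : n ≤ L) := Fin.natCast_eq_natCast_iff_of_le hm hn
  set s := (Finset.Icc 1 L).image (fun n : ℕ => (n : Fin (L + 1)))
  have hinj : Set.InjOn (fun n : ℕ => (n : Fin (L + 1))) (Finset.Icc 1 L) :=
    fun m hm n hn => (hcast (Finset.mem_Icc.1 hm).2 (Finset.mem_Icc.1 hn).2).1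
  have ha : ((ℓ' + 1 : ℕ) : Fin (L + 1)) ∈ s :=
    Finset.mem_image_of_mem _ (Finset.mem_Icc.2 ⟨by omega, hshift⟩)
  have hb : ((1 : ℕ) : Fin (L + 1)) ∈ s :=
    Finset.mem_image_of_mem _ (Finset.mem_Icc.2 ⟨le_rfl, by omega⟩)
  have hab : ((ℓ' + 1 : ℕ) : Fin (L + 1)) ≠ ((1 : ℕ) : Fin (L + 1)) := by
    rw [Ne, hcast hshift (by omega)]
    omega
  have hq' : (fun ν => q ν ℓ') =
      fun ν => ν ((ℓ' + 1 : ℕ) : Fin (L + 1)) / (1 - ν ((1 : ℕ) : Fin (L + 1))) :=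
    funext fun ν => by rw [hq, if_pos hshift]
  have hind : (if ℓ = 1 then (0 : ℝ) else 1) = if 1 < ℓ then 1 else 0 := by grind
  rw [show _ - _ = centeredPartialDeriv s (fun ν => q ν ℓ') ξ ℓ by
      rw [centeredPartialDeriv, Finset.sum_image hinj],
    hq', centeredPartialDeriv_apply_div_one_sub_apply ha hb hab h1.ne, hq, if_pos hshift]
  simp only [hcast hℓ.2 hshift, hcast hℓ.2 (by omega : 1 ≤ L), hind]

/-- Mean-centered partial derivative of the shifted-and-renormalized
remaining-service-duration pmf `q_ξ(ℓ') = ξ(ℓ'+1)/(1-ξ(1))` (for `ℓ'+1 ≤ L`,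
and `q_ξ(L) = 0`):
`∂^ctrd q_ξ(ℓ')/∂ξ(ℓ) = 𝟙(ℓ>1)/(1-ξ(1)) ⬝ (𝟙(ℓ=ℓ'+1) - q_ξ(ℓ'))`. -/
theorem shifted_pmf_centered_deriv (L : ℕ) (hL : 1 ≤ L)
    (ξ : Fin (L + 1) → ℝ)
    (hnn : ∀ i, 0 ≤ ξ i)
    (hsum : ∑ i ∈ Finset.Icc 1 L, ξ ((i : ℕ) : Fin (L + 1)) = 1)
    (h1 : ξ ((1 : ℕ) : Fin (L + 1)) < 1)
    (q : (Fin (L + 1) → ℝ) → ℕ → ℝ)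
    (hq : ∀ ν ℓ', q ν ℓ' =
      if ℓ' + 1 ≤ L then ν ((ℓ' + 1 : ℕ) : Fin (L + 1)) / (1 - ν ((1 : ℕ) : Fin (L + 1)))
      else 0)
    (ℓ ℓ' : ℕ) (hℓ : ℓ ∈ Finset.Icc 1 L) (hℓ' : ℓ' ∈ Finset.Icc 1 L) :
    fderiv ℝ (fun ν => q ν ℓ') ξ (Pi.single ((ℓ : ℕ) : Fin (L + 1)) 1)
        - ∑ ℓt ∈ Finset.Icc 1 L, ξ ((ℓt : ℕ) : Fin (L + 1)) *
            fderiv ℝ (fun ν => q ν ℓ') ξ (Pi.single ((ℓt : ℕ) : Fin (L + 1)) 1)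
      = (if 1 < ℓ then 1 else 0) / (1 - ξ ((1 : ℕ) : Fin (L + 1))) *
          ((if ℓ = ℓ' + 1 then 1 else 0) - q ξ ℓ') :=
  shifted_pmf_centered_deriv_general L ξ h1 q hq ℓ ℓ' hℓ hℓ'
end

section
/- Let $A_1, A_2$ be real square matrices of the same size that are symmetric, have the same range space $V$, and are invertible as linear maps on $V$ (with null space $V^\perp$). Then $(A_1^\dagger A_2)^\dagger A_1^\dagger = A_2^\dagger$, where $\dagger$ denotes the Moore–Penrose pseudoinverse. -/
open Matrix

/-- The four Penrose conditions characterizing the Moore–Penrose pseudoinverse. -/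
def IsMoorePenroseInv {n : ℕ} (A G : Matrix (Fin n) (Fin n) ℝ) : Prop :=
  A * G * A = A ∧ G * A * G = G ∧ (A * G)ᵀ = A * G ∧ (G * A)ᵀ = G * A

private lemma mp_unique {n : ℕ} {A G G' : Matrix (Fin n) (Fin n) ℝ}
    (h : IsMoorePenroseInv A G) (h' : IsMoorePenroseInv A G') : G = G' := by
  obtain ⟨h1, h2, h3, h4⟩ := h
  obtain ⟨h1', h2', h3', h4'⟩ := h'
  have e1 : A * G = A * G' := by
    calc A * G = (A * G)ᵀ := h3.symm
      _ = ((A * G' * A) * G)ᵀ := by rw [h1']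
      _ = (A * G)ᵀ * (A * G')ᵀ := by rw [mul_assoc, transpose_mul]
      _ = (A * G) * (A * G') := by rw [h3, h3']
      _ = (A * G * A) * G' := by simp only [mul_assoc]
      _ = A * G' := by rw [h1]
  have e2 : G * A = G' * A := by
    calc G * A = (G * A)ᵀ := h4.symm
      _ = (G * (A * G' * A))ᵀ := by rw [h1']
      _ = ((G * A) * (G' * A))ᵀ := by simp only [mul_assoc]
      _ = (G' * A)ᵀ * (G * A)ᵀ := by rw [transpose_mul]
      _ = (G' * A) * (G * A) := by rw [h4, h4']
      _ = G' * (A * G * A) := by rw [← mul_assoc, ← mul_assoc, mul_assoc G']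
      _ = G' * A := by rw [h1]
  calc G = G * A * G := h2.symm
    _ = G' * A * G := by rw [e2]
    _ = G' * (A * G') := by rw [mul_assoc, e1]
    _ = G' := by rw [← mul_assoc, h2']

private lemma mp_transpose {n : ℕ} {A G : Matrix (Fin n) (Fin n) ℝ}
    (hA : Aᵀ = A) (h : IsMoorePenroseInv A G) : IsMoorePenroseInv A Gᵀ := by
  obtain ⟨h1, h2, h3, h4⟩ := h
  refine ⟨?_, ?_, ?_, ?_⟩
  · have := congrArg transpose h1
    simpa [transpose_mul, hA, mul_assoc] using this
  · have := congrArg transpose h2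
    simpa [transpose_mul, hA, mul_assoc] using this
  · have k1 : A * Gᵀ = G * A := by
      have h : (G * A)ᵀ = A * Gᵀ := by rw [transpose_mul, hA]
      rw [← h, h4]
    rw [k1, h4]
  · have k2 : Gᵀ * A = A * G := by
      have h : (A * G)ᵀ = Gᵀ * A := by rw [transpose_mul, hA]
      rw [← h, h3]
    rw [k2, h3]

private lemma ext_mulVec {n : ℕ} {A B : Matrix (Fin n) (Fin n) ℝ}
    (h : ∀ v, A.mulVec v = B.mulVec v) : A = B := by
  ext i j
  have := congrFun (h (Pi.single j 1)) i
  simpa using this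

/-- For symmetric matrices `A₁, A₂` with the same range that are invertible as maps
on that range: `(A₁† A₂)† A₁† = A₂†`. -/
theorem pinv_composition {n : ℕ} (A₁ A₂ G₁ G₂ G₁₂ : Matrix (Fin n) (Fin n) ℝ)
    (hA₁ : A₁ᵀ = A₁) (hA₂ : A₂ᵀ = A₂)
    (hrange : ∀ v : Fin n → ℝ,
      (∃ u, A₁.mulVec u = v) ↔ (∃ u, A₂.mulVec u = v))
    (h₁ : IsMoorePenroseInv A₁ G₁) (h₂ : IsMoorePenroseInv A₂ G₂)
    (h₁₂ : IsMoorePenroseInv (G₁ * A₂) G₁₂) :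
    G₁₂ * G₁ = G₂ := by
  -- G₁, G₂ are symmetric
  have hG₁ : G₁ᵀ = G₁ := mp_unique (mp_transpose hA₁ h₁) h₁
  have hG₂ : G₂ᵀ = G₂ := mp_unique (mp_transpose hA₂ h₂) h₂
  obtain ⟨a1, a2, a3, a4⟩ := h₁
  obtain ⟨b1, b2, b3, b4⟩ := h₂
  -- A₁ G₁ * A₂ = A₂
  have p1 : A₁ * G₁ * A₂ = A₂ := by
    apply ext_mulVec
    intro v
    obtain ⟨u, hu⟩ := (hrange (A₂.mulVec v)).2 ⟨v, rfl⟩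
    calc (A₁ * G₁ * A₂).mulVec v = (A₁ * G₁).mulVec (A₂.mulVec v) := by
          rw [← Matrix.mulVec_mulVec]
      _ = (A₁ * G₁).mulVec (A₁.mulVec u) := by rw [hu]
      _ = (A₁ * G₁ * A₁).mulVec u := by rw [Matrix.mulVec_mulVec]
      _ = A₁.mulVec u := by rw [a1]
      _ = A₂.mulVec v := hu
  have p2 : A₂ * G₂ * A₁ = A₁ := by
    apply ext_mulVec
    intro v
    obtain ⟨u, hu⟩ := (hrange (A₁.mulVec v)).1 ⟨v, rfl⟩
    calc (A₂ * G₂ * A₁).mulVec v = (A₂ * G₂).mulVec (A₁.mulVec v) := by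
          rw [← Matrix.mulVec_mulVec]
      _ = (A₂ * G₂).mulVec (A₂.mulVec u) := by rw [hu]
      _ = (A₂ * G₂ * A₂).mulVec u := by rw [Matrix.mulVec_mulVec]
      _ = A₂.mulVec u := by rw [b1]
      _ = A₁.mulVec v := hu
  -- the two projections coincide
  have hP12 : (A₁ * G₁) * (A₂ * G₂) = A₂ * G₂ := by
    rw [← mul_assoc, p1]
  have hP21 : (A₂ * G₂) * (A₁ * G₁) = A₁ * G₁ := by
    rw [← mul_assoc, p2]
  have hP : A₁ * G₁ = A₂ * G₂ := by
    calc A₁ * G₁ = (A₂ * G₂) * (A₁ * G₁) := hP21.symm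
      _ = ((A₂ * G₂) * (A₁ * G₁))ᵀᵀ := (transpose_transpose _).symm
      _ = ((A₁ * G₁)ᵀ * (A₂ * G₂)ᵀ)ᵀ := by rw [transpose_mul]
      _ = ((A₁ * G₁) * (A₂ * G₂))ᵀ := by rw [a3, b3]
      _ = (A₂ * G₂)ᵀ := by rw [hP12]
      _ = A₂ * G₂ := b3
  -- candidate: G₂ * A₁ is a Moore-Penrose inverse of G₁ * A₂
  -- useful: P := A₁ * G₁ with P * A₁ = A₁, P * A₂ = A₂, G₁ * P = G₁, G₂ * P = G₂
  have hPA₁ : (A₁ * G₁) * A₁ = A₁ := a1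
  have hPA₂ : (A₁ * G₁) * A₂ = A₂ := p1
  have hG₁P : G₁ * (A₁ * G₁) = G₁ := by rw [← mul_assoc, a2]
  have hG₂P : G₂ * (A₁ * G₁) = G₂ := by rw [hP, ← mul_assoc, b2]
  have cand : IsMoorePenroseInv (G₁ * A₂) (G₂ * A₁) := by
    refine ⟨?_, ?_, ?_, ?_⟩
    · calc G₁ * A₂ * (G₂ * A₁) * (G₁ * A₂)
          = G₁ * ((A₂ * G₂) * ((A₁ * G₁) * A₂)) := by
            simp only [mul_assoc]
      _ = G₁ * ((A₂ * G₂) * A₂) := by rw [hPA₂]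
      _ = G₁ * A₂ := by rw [b1]
    · calc G₂ * A₁ * (G₁ * A₂) * (G₂ * A₁)
          = G₂ * ((A₁ * G₁) * ((A₂ * G₂) * A₁)) := by
            simp only [mul_assoc]
      _ = G₂ * ((A₁ * G₁) * A₁) := by rw [p2]
      _ = G₂ * A₁ := by rw [hPA₁]
    · have : G₁ * A₂ * (G₂ * A₁) = A₁ * G₁ := by
        calc G₁ * A₂ * (G₂ * A₁) = G₁ * ((A₂ * G₂) * A₁) := by
              simp only [mul_assoc]
          _ = G₁ * A₁ := by rw [p2]
          _ = A₁ * G₁ := by rw [← a4, transpose_mul, hA₁, hG₁]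
      rw [this, a3]
    · have : G₂ * A₁ * (G₁ * A₂) = A₂ * G₂ := by
        calc G₂ * A₁ * (G₁ * A₂) = G₂ * ((A₁ * G₁) * A₂) := by
              simp only [mul_assoc]
          _ = G₂ * A₂ := by rw [hPA₂]
          _ = A₂ * G₂ := by rw [← b4, transpose_mul, hA₂, hG₂]
      rw [this, b3]
  have hG₁₂ : G₁₂ = G₂ * A₁ := mp_unique h₁₂ cand
  rw [hG₁₂, mul_assoc, hG₂P]
end
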